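/- arXiv:2004.07192 — 5 statements merged into one kernel-verified Lean document; each statement's English description precedes it below -/
import Mathlib

section
/- Let 0 < c_S < 1 and 0 < c_B < 1 be real numbers, and set p_k = (1 - c_S) * c_S^k for k ∈ ℕ. Then the series ∑_{k=1}^∞ k * p_{k-1} * p_k / (√(p_{k-1}) + √(p_k * c_B))² converges and its sum equals c_S / ((1 - c_S) * (1 + √(c_S * c_B))²). -/
/-- The series evaluating the quantum Chernoff exponent of the two-mode squeezed vacuum
transmitter: with `p k = (1 - c_S) * c_S ^ k`, the series
`∑_{k=1}^∞ k * p (k-1) * p k / (√(p (k-1)) + √(p k * c_B))²` (reindexed by `k = j + 1`)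
has sum `c_S / ((1 - c_S) * (1 + √(c_S * c_B))²)`. -/
theorem tmsv_chernoff_series (c_S c_B : ℝ) (hS0 : 0 < c_S) (hS1 : c_S < 1)
    (hB0 : 0 < c_B) (hB1 : c_B < 1) (p : ℕ → ℝ)
    (hp : ∀ k : ℕ, p k = (1 - c_S) * c_S ^ k) :
    HasSum (fun j : ℕ => ((j : ℝ) + 1) * p j * p (j + 1) /
        (Real.sqrt (p j) + Real.sqrt (p (j + 1) * c_B)) ^ 2)
      (c_S / ((1 - c_S) * (1 + Real.sqrt (c_S * c_B)) ^ 2)) := by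
  have h1 : 0 < 1 - c_S := by linarith
  set A := Real.sqrt (c_S * c_B) with hA
  have hA0 : 0 ≤ A := Real.sqrt_nonneg _
  have hApos : 0 < 1 + A := by linarith
  have hnorm : ‖c_S‖ < 1 := by rw [Real.norm_eq_abs, abs_of_pos hS0]; exact hS1
  -- the basic sum ∑ (j+1) c_S^j = 1/(1-c_S)^2
  have hsum : HasSum (fun j : ℕ => ((j : ℝ) + 1) * c_S ^ j) (1 / (1 - c_S) ^ 2) := by
    have h2 := hasSum_coe_mul_geometric_of_norm_lt_one (r := c_S) hnorm
    have h3 := hasSum_geometric_of_lt_one hS0.le hS1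
    have h4 := h2.add h3
    have : c_S / (1 - c_S) ^ 2 + (1 - c_S)⁻¹ = 1 / (1 - c_S) ^ 2 := by
      field_simp; ring
    rw [this] at h4
    exact h4.congr_fun (fun j => by ring)
  set C : ℝ := (1 - c_S) * c_S / (1 + A) ^ 2 with hC
  have key : ∀ j : ℕ, ((j : ℝ) + 1) * p j * p (j + 1) /
      (Real.sqrt (p j) + Real.sqrt (p (j + 1) * c_B)) ^ 2
      = C * (((j : ℝ) + 1) * c_S ^ j) := by
    intro j
    have hpj : 0 ≤ (1 - c_S) * c_S ^ j := by positivity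
    have hden : Real.sqrt (p j) + Real.sqrt (p (j + 1) * c_B)
        = Real.sqrt ((1 - c_S) * c_S ^ j) * (1 + A) := by
      rw [hp, hp, hA]
      have : (1 - c_S) * c_S ^ (j + 1) * c_B = ((1 - c_S) * c_S ^ j) * (c_S * c_B) := by
        ring
      rw [this, Real.sqrt_mul hpj]
      ring
    rw [hden, hp, hp]
    have hsq : Real.sqrt ((1 - c_S) * c_S ^ j) ^ 2 = (1 - c_S) * c_S ^ j :=
      Real.sq_sqrt hpj
    rw [mul_pow, hsq, hC]
    have hne : (1 - c_S) * c_S ^ j ≠ 0 := by positivity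
    have hne2 : (1 + A) ^ 2 ≠ 0 := by positivity
    field_simp
    ring
  have h5 := hsum.mul_left C
  have hval : C * (1 / (1 - c_S) ^ 2) = c_S / ((1 - c_S) * (1 + A) ^ 2) := by
    rw [hC]
    have : (1 + A) ^ 2 ≠ 0 := by positivity
    field_simp
  rw [hval] at h5
  exact h5.congr_fun (fun j => key j)
end

section
/- As x → 0⁺, the function g(x) = 2(1 + e^{-4x})/(1 + √(1 - e^{-4x})) satisfies g(x) = 4 - 8√x + O(x); that is, the function x ↦ g(x) - (4 - 8√x) is O(x) in the right-neighborhood filter of 0. -/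
open Asymptotics

set_option maxHeartbeats 1000000 in
/-- As `x → 0⁺`, the prefactor `g(x) = 2(1 + e^{-4x})/(1 + √(1 - e^{-4x}))` satisfies
`g(x) = 4 - 8√x + O(x)`. -/
theorem sc_prefactor_expansion :
    (fun x : ℝ =>
        2 * (1 + Real.exp (-4 * x)) / (1 + Real.sqrt (1 - Real.exp (-4 * x)))
          - (4 - 8 * Real.sqrt x))
      =O[nhdsWithin 0 (Set.Ioi 0)] (fun x : ℝ => x) := by
  rw [Asymptotics.isBigO_iff]
  refine ⟨56, ?_⟩
  filter_upwards [Ioo_mem_nhdsGT_of_mem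
    (by norm_num : (0:ℝ) ∈ Set.Ico (0:ℝ) (1/8))] with x hx
  obtain ⟨hx0, hx1⟩ := hx
  set e := Real.exp (-4 * x) with he
  set u := 1 - e with hu
  set s := Real.sqrt u with hs
  set r := Real.sqrt x with hr
  have hr0 : 0 ≤ r := Real.sqrt_nonneg x
  have hrpos : 0 < r := Real.sqrt_pos.mpr hx0
  have hr2 : r ^ 2 = x := Real.sq_sqrt hx0.le
  have hr1 : r ≤ 1 := by
    rw [hr]
    exact Real.sqrt_le_one.mpr (by linarith)
  -- e < 1 so u > 0
  have he1 : e < 1 := by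
    rw [he]
    exact Real.exp_lt_one_iff.mpr (by linarith)
  have hu0 : 0 < u := by simp [hu]; linarith
  -- u ≤ 4x
  have hub : u ≤ 4 * x := by
    have := Real.add_one_le_exp (-4 * x)
    simp only [hu, he]
    linarith
  -- u ≥ 4x - 16x²
  have hlb : 4 * x - 16 * x ^ 2 ≤ u := by
    have h1 : 1 + 4 * x ≤ Real.exp (4 * x) := by
      have := Real.add_one_le_exp (4 * x); linarith
    have hexp : e = (Real.exp (4 * x))⁻¹ := by
      rw [he, ← Real.exp_neg]; ring_nf
    have hpos : (0:ℝ) < 1 + 4 * x := by linarith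
    have h2 : e ≤ (1 + 4 * x)⁻¹ := by
      rw [hexp]
      exact inv_anti₀ hpos h1
    have h3 : (1 + 4 * x)⁻¹ ≤ 1 - 4 * x + 16 * x ^ 2 := by
      rw [inv_le_iff_one_le_mul₀ hpos]
      nlinarith [pow_pos hx0 3]
    simp only [hu]
    nlinarith
  have hs0 : 0 ≤ s := Real.sqrt_nonneg u
  have hs2 : s ^ 2 = u := Real.sq_sqrt hu0.le
  -- s ≤ 2r
  have hs2r : s ≤ 2 * r := by
    have h4x : u ≤ (2 * r) ^ 2 := by nlinarith
    nlinarith [Real.sqrt_nonneg u]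
  -- |2r - s| ≤ 8 x
  have hdiff : |2 * r - s| ≤ 8 * x := by
    have hsum : 0 < 2 * r + s := by linarith
    have hnum : 0 ≤ 4 * x - u := by linarith
    have hprod : (2 * r - s) * (2 * r + s) = 4 * x - u := by nlinarith
    have h1 : 0 ≤ 2 * r - s := by
      by_contra h
      push_neg at h
      nlinarith
    rw [abs_of_nonneg h1]
    -- (2r - s) ≤ 16 x² / (2r) = 8 x r ≤ 8x
    have : (2 * r - s) * (2 * r + s) ≤ 16 * x ^ 2 := by nlinarith
    have hxr : x ^ 2 = (r * r) * x := by nlinarith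
    nlinarith [mul_pos hrpos hx0]
  have hD : (0:ℝ) < 1 + s := by linarith
  -- rewrite the difference
  have key : 2 * (1 + e) / (1 + s) - (4 - 8 * r)
      = (-2 * u + 8 * r * s + 4 * (2 * r - s)) / (1 + s) := by
    have h4 : (4 - 8 * r) = (4 - 8 * r) * (1 + s) / (1 + s) :=
      (mul_div_cancel_right₀ _ hD.ne').symm
    rw [h4, div_sub_div_same]
    congr 1
    rw [hu]
    ring
  rw [key]
  simp only [Real.norm_eq_abs]
  rw [abs_div, abs_of_pos hD]
  have hnum_bound : |-2 * u + 8 * r * s + 4 * (2 * r - s)| ≤ 56 * x := by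
    have h1 : |-2 * u| ≤ 8 * x := by
      rw [abs_of_nonpos (by linarith)]; linarith
    have h2 : |8 * r * s| ≤ 16 * x := by
      rw [abs_of_nonneg (by positivity)]
      nlinarith
    have h3 : |4 * (2 * r - s)| ≤ 32 * x := by
      rw [abs_mul, abs_of_nonneg (by norm_num : (0:ℝ) ≤ 4)]
      linarith
    calc |-2 * u + 8 * r * s + 4 * (2 * r - s)|
        ≤ |-2 * u + 8 * r * s| + |4 * (2 * r - s)| := abs_add_le _ _
      _ ≤ |-2 * u| + |8 * r * s| + |4 * (2 * r - s)| := by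
          linarith [abs_add_le (-2 * u) (8 * r * s)]
      _ ≤ 56 * x := by linarith
  have hdiv : |-2 * u + 8 * r * s + 4 * (2 * r - s)| / (1 + s)
      ≤ |-2 * u + 8 * r * s + 4 * (2 * r - s)| := by
    apply div_le_self (abs_nonneg _)
    linarith
  rw [abs_of_pos hx0]
  linarith
end

section
/- Let 0 < c < 1 be real, let (p_k)_{k∈ℕ} be nonnegative reals with ∑_k p_k = 1, let (n_k)_{k∈ℕ} be nonnegative reals such that (p_k n_k) is summable with ∑_k p_k n_k = N, and let (a_{jk})_{j,k∈ℕ} be complex numbers such that for each k the family (|a_{jk}|²)_j is summable with ∑_j |a_{jk}|² = n_k, and for each j the family (|a_{jk}|²)_k is summable with ∑_k |a_{jk}|² = n_j + 1. Then the family p_k p_j |a_{jk}|² / (√(p_j) + √(p_k c))² (indexed by (j,k) ∈ ℕ×ℕ, with the convention 0/0 = 0) is summable, and its sum S satisfies S ≤ min( N , (2N + 1)/(8√c) ). -/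
set_option maxHeartbeats 1000000


/-- Ultimate receiver error-probability bound for collective strategies (core of Theorem 1):
for Schmidt coefficients `p`, photon numbers `n` with `∑ p k * n k = N`, and matrix
elements `a j k` with `∑_j |a j k|² = n k` and `∑_k |a j k|² = n j + 1`, the family
`p k * p j * |a j k|² / (√(p j) + √(p k * c))²` is summable with sum at most
`min N ((2N+1)/(8√c))`. -/
theorem chernoff_ultimate_bound (c : ℝ) (hc0 : 0 < c) (hc1 : c < 1)
    (p n : ℕ → ℝ) (N : ℝ) (a : ℕ → ℕ → ℂ)
    (hp : ∀ k, 0 ≤ p k) (hpsum : HasSum p 1)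
    (hn : ∀ k, 0 ≤ n k) (hN : HasSum (fun k => p k * n k) N)
    (hcol : ∀ k, HasSum (fun j => ‖a j k‖ ^ 2) (n k))
    (hrow : ∀ j, HasSum (fun k => ‖a j k‖ ^ 2) (n j + 1)) :
    Summable (fun jk : ℕ × ℕ =>
        p jk.2 * p jk.1 * ‖a jk.1 jk.2‖ ^ 2 /
          (Real.sqrt (p jk.1) + Real.sqrt (p jk.2 * c)) ^ 2) ∧
      (∑' jk : ℕ × ℕ, p jk.2 * p jk.1 * ‖a jk.1 jk.2‖ ^ 2 /
          (Real.sqrt (p jk.1) + Real.sqrt (p jk.2 * c)) ^ 2) ≤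
        min N ((2 * N + 1) / (8 * Real.sqrt c)) := by
  have hsc : 0 < Real.sqrt c := Real.sqrt_pos.mpr hc0
  set f : ℕ × ℕ → ℝ := fun jk =>
    p jk.2 * p jk.1 * ‖a jk.1 jk.2‖ ^ 2 /
      (Real.sqrt (p jk.1) + Real.sqrt (p jk.2 * c)) ^ 2 with hfdef
  have hA0 : ∀ j k, (0:ℝ) ≤ ‖a j k‖ ^ 2 := fun j k => sq_nonneg _
  have hf0 : ∀ jk, 0 ≤ f jk := by
    intro jk
    apply div_nonneg
    · have h1 := hp jk.1; have h2 := hp jk.2; positivity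
    · positivity
  -- pointwise bound 1
  have hb1 : ∀ j k, f (j, k) ≤ p k * ‖a j k‖ ^ 2 := by
    intro j k
    rcases eq_or_lt_of_le (hp j) with h0 | h0
    · have hz : f (j, k) = 0 := by simp [hfdef, ← h0]
      rw [hz]
      exact mul_nonneg (hp k) (hA0 j k)
    · have hD : p j ≤ (Real.sqrt (p j) + Real.sqrt (p k * c)) ^ 2 := by
        have h1 : Real.sqrt (p j) ^ 2 = p j := Real.sq_sqrt (hp j)
        nlinarith [Real.sqrt_nonneg (p j), Real.sqrt_nonneg (p k * c)]
      have hle : f (j, k) ≤ p k * p j * ‖a j k‖ ^ 2 / p j := by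
        apply div_le_div_of_nonneg_left _ h0 hD
        have := hp k; have := hA0 j k; positivity
      refine hle.trans (le_of_eq ?_)
      field_simp
  -- pointwise bound 2
  have hb2 : ∀ j k, f (j, k) ≤
      (p j * ‖a j k‖ ^ 2 + p k * ‖a j k‖ ^ 2) / (8 * Real.sqrt c) := by
    intro j k
    rcases eq_or_lt_of_le (hp j) with h0 | h0
    · have hz : f (j, k) = 0 := by simp [hfdef, ← h0]
      rw [hz]
      have := hp k; have := hA0 j k; positivity
    rcases eq_or_lt_of_le (hp k) with h1 | h1
    · have hz : f (j, k) = 0 := by simp [hfdef, ← h1]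
      rw [hz]
      have := hp j; have := hA0 j k; positivity
    have hs : 0 < Real.sqrt (p j) := Real.sqrt_pos.mpr h0
    have ht : 0 < Real.sqrt (p k) := Real.sqrt_pos.mpr h1
    set s := Real.sqrt (p j) with hsdef
    set t := Real.sqrt (p k) with htdef
    have hpj : p j = s * s := (Real.mul_self_sqrt (hp j)).symm
    have hpk : p k = t * t := (Real.mul_self_sqrt (hp k)).symm
    have hsq : Real.sqrt (p k * c) = t * Real.sqrt c := Real.sqrt_mul (hp k) c
    have hA := hA0 j k
    have hD : 4 * (s * (t * Real.sqrt c)) ≤ (s + t * Real.sqrt c) ^ 2 := by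
      nlinarith [sq_nonneg (s - t * Real.sqrt c)]
    have hle : f (j, k) ≤ p k * p j * ‖a j k‖ ^ 2 / (4 * (s * (t * Real.sqrt c))) := by
      have : f (j, k) = p k * p j * ‖a j k‖ ^ 2 / (s + t * Real.sqrt c) ^ 2 := by
        rw [hfdef]; dsimp only; rw [hsq]
      rw [this]
      apply div_le_div_of_nonneg_left _ (by positivity) hD
      have := hp k; have := hp j; positivity
    refine hle.trans ?_
    rw [hpj, hpk, div_le_div_iff₀ (by positivity) (by positivity)]
    nlinarith [mul_nonneg (sq_nonneg (s - t))
      (by positivity : (0:ℝ) ≤ s * t * Real.sqrt c * ‖a j k‖ ^ 2)]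
  -- summable dominator 1 (in (k, j) order) with sum N
  have hfib1 : ∀ k, HasSum (fun j => p k * ‖a j k‖ ^ 2) (p k * n k) :=
    fun k => (hcol k).mul_left (p k)
  have hsumm1 : Summable (fun kj : ℕ × ℕ => p kj.1 * ‖a kj.2 kj.1‖ ^ 2) := by
    rw [summable_prod_of_nonneg (fun kj => mul_nonneg (hp _) (hA0 _ _))]
    refine ⟨fun k => (hfib1 k).summable, ?_⟩
    exact hN.summable.congr fun k => ((hfib1 k).tsum_eq).symm
  have hg1 : HasSum (fun kj : ℕ × ℕ => p kj.1 * ‖a kj.2 kj.1‖ ^ 2) N := by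
    have ht : ∑' kj : ℕ × ℕ, p kj.1 * ‖a kj.2 kj.1‖ ^ 2 = N := by
      rw [Summable.tsum_prod' hsumm1 (fun k => (hfib1 k).summable)]
      calc _ = ∑' k, p k * n k := tsum_congr fun k => (hfib1 k).tsum_eq
        _ = N := hN.tsum_eq
    exact ht ▸ hsumm1.hasSum
  have hg1' : HasSum (fun jk : ℕ × ℕ => p jk.2 * ‖a jk.1 jk.2‖ ^ 2) N :=
    (Equiv.prodComm ℕ ℕ).hasSum_iff.mpr hg1
  -- summable dominator 2 (in (j, k) order) with sum N + 1
  have hfib2 : ∀ j, HasSum (fun k => p j * ‖a j k‖ ^ 2) (p j * (n j + 1)) :=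
    fun j => (hrow j).mul_left (p j)
  have houter2 : HasSum (fun j => p j * (n j + 1)) (N + 1) := by
    have := hN.add hpsum
    exact this.congr_fun (fun j => by ring)
  have hsumm2 : Summable (fun jk : ℕ × ℕ => p jk.1 * ‖a jk.1 jk.2‖ ^ 2) := by
    rw [summable_prod_of_nonneg (fun jk => mul_nonneg (hp _) (hA0 _ _))]
    refine ⟨fun j => (hfib2 j).summable, ?_⟩
    exact houter2.summable.congr fun j => ((hfib2 j).tsum_eq).symm
  have hg2 : HasSum (fun jk : ℕ × ℕ => p jk.1 * ‖a jk.1 jk.2‖ ^ 2) (N + 1) := by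
    have ht : ∑' jk : ℕ × ℕ, p jk.1 * ‖a jk.1 jk.2‖ ^ 2 = N + 1 := by
      rw [Summable.tsum_prod' hsumm2 (fun j => (hfib2 j).summable)]
      calc _ = ∑' j, p j * (n j + 1) := tsum_congr fun j => (hfib2 j).tsum_eq
        _ = N + 1 := houter2.tsum_eq
    exact ht ▸ hsumm2.hasSum
  have hh : HasSum (fun jk : ℕ × ℕ =>
      (p jk.1 * ‖a jk.1 jk.2‖ ^ 2 + p jk.2 * ‖a jk.1 jk.2‖ ^ 2)
        / (8 * Real.sqrt c)) ((2 * N + 1) / (8 * Real.sqrt c)) := by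
    have := (hg2.add hg1').div_const (8 * Real.sqrt c)
    convert this using 2
    · rfl
    ring
  have hfs : Summable f :=
    Summable.of_nonneg_of_le hf0 (fun jk => hb1 jk.1 jk.2) hg1'.summable
  refine ⟨hfs, le_min ?_ ?_⟩
  · calc ∑' jk, f jk ≤ ∑' jk : ℕ × ℕ, p jk.2 * ‖a jk.1 jk.2‖ ^ 2 :=
        Summable.tsum_le_tsum (fun jk => hb1 jk.1 jk.2) hfs hg1'.summable
      _ = N := hg1'.tsum_eq
  · calc ∑' jk, f jk ≤ ∑' jk : ℕ × ℕ,
          (p jk.1 * ‖a jk.1 jk.2‖ ^ 2 + p jk.2 * ‖a jk.1 jk.2‖ ^ 2)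
            / (8 * Real.sqrt c) :=
        Summable.tsum_le_tsum (fun jk => hb2 jk.1 jk.2) hfs hh.summable
      _ = (2 * N + 1) / (8 * Real.sqrt c) := hh.tsum_eq
end

section
/- Let 0 < c < 1 be real, let (p_k)_{k∈ℕ} be nonnegative reals with ∑_k p_k = 1, let (n_k)_{k∈ℕ} be nonnegative reals such that (p_k n_k) is summable with ∑_k p_k n_k = N, and let (a_{jk})_{j,k∈ℕ} be complex numbers such that for each k the family (|a_{jk}|²)_j is summable with ∑_j |a_{jk}|² = n_k, and for each j the family (|a_{jk}|²)_k is summable with ∑_k |a_{jk}|² = n_j + 1. Then the family p_k p_j |a_{jk}|² / (p_j + p_k c) (indexed by (j,k) ∈ ℕ×ℕ, with the convention 0/0 = 0) is summable, and its sum S' satisfies S' ≤ min( N , (2N + 1)/(4√c) ). -/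
private lemma qfi_key (s x y : ℝ) (hs : 0 ≤ s) :
    4 * s * (x ^ 2 * y ^ 2) ≤ (x ^ 2 + y ^ 2 * s ^ 2) * (x ^ 2 + y ^ 2) := by
  nlinarith [sq_nonneg (x ^ 2 - s * y ^ 2), sq_nonneg (x * y * (1 - s)), sq_nonneg (x*y)]

/-- Ultimate quantum Fisher information bound for local strategies (core of Theorem 2):
for Schmidt coefficients `p`, photon numbers `n` with `∑ p k * n k = N`, and matrix
elements `a j k` with `∑_j |a j k|² = n k` and `∑_k |a j k|² = n j + 1`, the family
`p k * p j * |a j k|² / (p j + p k * c)` is summable with sum at most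
`min N ((2N+1)/(4√c))`. -/
theorem qfi_ultimate_bound (c : ℝ) (hc0 : 0 < c) (hc1 : c < 1)
    (p n : ℕ → ℝ) (N : ℝ) (a : ℕ → ℕ → ℂ)
    (hp : ∀ k, 0 ≤ p k) (hpsum : HasSum p 1)
    (hn : ∀ k, 0 ≤ n k) (hN : HasSum (fun k => p k * n k) N)
    (hcol : ∀ k, HasSum (fun j => ‖a j k‖ ^ 2) (n k))
    (hrow : ∀ j, HasSum (fun k => ‖a j k‖ ^ 2) (n j + 1)) :
    Summable (fun jk : ℕ × ℕ =>
        p jk.2 * p jk.1 * ‖a jk.1 jk.2‖ ^ 2 / (p jk.1 + p jk.2 * c)) ∧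
      (∑' jk : ℕ × ℕ, p jk.2 * p jk.1 * ‖a jk.1 jk.2‖ ^ 2 /
          (p jk.1 + p jk.2 * c)) ≤
        min N ((2 * N + 1) / (4 * Real.sqrt c)) := by
  have hs : 0 < Real.sqrt c := Real.sqrt_pos.mpr hc0
  set A : ℕ × ℕ → ℝ := fun jk => ‖a jk.1 jk.2‖ ^ 2 with hA
  have hAnn : ∀ jk, 0 ≤ A jk := fun jk => sq_nonneg _
  set f : ℕ × ℕ → ℝ := fun jk =>
    p jk.2 * p jk.1 * ‖a jk.1 jk.2‖ ^ 2 / (p jk.1 + p jk.2 * c) with hf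
  have hfnn : ∀ jk, 0 ≤ f jk := by
    intro jk
    apply div_nonneg
    · exact mul_nonneg (mul_nonneg (hp _) (hp _)) (hAnn jk)
    · exact add_nonneg (hp _) (mul_nonneg (hp _) hc0.le)
  -- g : with indices swapped, g (k, j) = p k * |a j k|^2
  set g : ℕ × ℕ → ℝ := fun kj => p kj.1 * ‖a kj.2 kj.1‖ ^ 2 with hg
  have hgnn : 0 ≤ g := fun kj => mul_nonneg (hp _) (sq_nonneg _)
  have hgfib : ∀ k, HasSum (fun j => g (k, j)) (p k * n k) := fun k =>
    (hcol k).mul_left (p k)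
  have hgsum : Summable g := by
    rw [summable_prod_of_nonneg hgnn]
    refine ⟨fun k => (hgfib k).summable, ?_⟩
    have : (fun k => ∑' j, g (k, j)) = fun k => p k * n k := by
      funext k; exact (hgfib k).tsum_eq
    rw [this]; exact hN.summable
  have hgtsum : ∑' kj, g kj = N := by
    rw [Summable.tsum_prod' hgsum (fun k => (hgfib k).summable)]
    have : (fun k => ∑' j, g (k, j)) = fun k => p k * n k := by
      funext k; exact (hgfib k).tsum_eq
    calc ∑' (k) (j), g (k, j) = ∑' k, p k * n k := by rw [show (fun k => ∑' j, g (k,j)) = fun k => p k * n k from this]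
    _ = N := hN.tsum_eq
  -- h1 jk = p jk.2 * A jk, which is g ∘ prodComm
  set h1 : ℕ × ℕ → ℝ := fun jk => p jk.2 * A jk with hh1
  have hh1g : h1 = g ∘ (Equiv.prodComm ℕ ℕ) := rfl
  have h1sum : Summable h1 := by rw [hh1g]; exact (Equiv.prodComm ℕ ℕ).summable_iff.mpr hgsum
  have h1tsum : ∑' jk, h1 jk = N := by
    rw [hh1g]
    exact ((Equiv.prodComm ℕ ℕ).tsum_eq g).trans hgtsum
  -- h2 jk = p jk.1 * A jk
  set h2 : ℕ × ℕ → ℝ := fun jk => p jk.1 * A jk with hh2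
  have hh2nn : 0 ≤ h2 := fun jk => mul_nonneg (hp _) (hAnn jk)
  have hh2fib : ∀ j, HasSum (fun k => h2 (j, k)) (p j * (n j + 1)) := fun j =>
    (hrow j).mul_left (p j)
  have hNp1 : HasSum (fun j => p j * (n j + 1)) (N + 1) := by
    have := hN.add hpsum
    convert this using 2 with j
    ring
  have h2sum : Summable h2 := by
    rw [summable_prod_of_nonneg hh2nn]
    refine ⟨fun j => (hh2fib j).summable, ?_⟩
    have : (fun j => ∑' k, h2 (j, k)) = fun j => p j * (n j + 1) := by
      funext j; exact (hh2fib j).tsum_eq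
    rw [this]; exact hNp1.summable
  have h2tsum : ∑' jk, h2 jk = N + 1 := by
    rw [Summable.tsum_prod' h2sum (fun j => (hh2fib j).summable)]
    have : (fun j => ∑' k, h2 (j, k)) = fun j => p j * (n j + 1) := by
      funext j; exact (hh2fib j).tsum_eq
    rw [show (fun j => ∑' k, h2 (j,k)) = fun j => p j * (n j + 1) from this]
    exact hNp1.tsum_eq
  -- pointwise bound 1 : f ≤ h1
  have hb1 : ∀ jk, f jk ≤ h1 jk := by
    intro ⟨j, k⟩
    simp only [hf, hh1, hA]
    by_cases hden : p j + p k * c = 0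
    · rw [hden, div_zero]
      exact mul_nonneg (hp _) (sq_nonneg _)
    · have hdpos : 0 < p j + p k * c :=
        lt_of_le_of_ne (add_nonneg (hp _) (mul_nonneg (hp _) hc0.le)) (Ne.symm hden)
      rw [div_le_iff₀ hdpos]
      have h1le : p j ≤ p j + p k * c := le_add_of_nonneg_right (mul_nonneg (hp _) hc0.le)
      nlinarith [mul_nonneg (hp k) (sq_nonneg (‖a j k‖)), hp k, sq_nonneg (‖a j k‖)]
  have hfsum : Summable f := Summable.of_nonneg_of_le hfnn hb1 h1sum
  -- pointwise bound 2 : f ≤ (h2 + h1) / (4 √c)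
  have hb2 : ∀ jk, f jk ≤ (h2 jk + h1 jk) / (4 * Real.sqrt c) := by
    intro ⟨j, k⟩
    simp only [hf, hh1, hh2, hA]
    by_cases hden : p j + p k * c = 0
    · rw [hden, div_zero]
      exact div_nonneg (add_nonneg (mul_nonneg (hp _) (sq_nonneg _))
        (mul_nonneg (hp _) (sq_nonneg _))) (by positivity)
    · have hdpos : 0 < p j + p k * c :=
        lt_of_le_of_ne (add_nonneg (hp _) (mul_nonneg (hp _) hc0.le)) (Ne.symm hden)
      rw [div_le_div_iff₀ hdpos (by positivity)]
      set x := Real.sqrt (p j) with hx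
      set y := Real.sqrt (p k) with hy
      set s := Real.sqrt c with hsd
      have hx2 : x ^ 2 = p j := Real.sq_sqrt (hp j)
      have hy2 : y ^ 2 = p k := Real.sq_sqrt (hp k)
      have hs2 : s ^ 2 = c := Real.sq_sqrt hc0.le
      have hkey := qfi_key s x y (Real.sqrt_nonneg c)
      rw [hx2, hy2, hs2] at hkey
      have hAnn' : (0:ℝ) ≤ ‖a j k‖ ^ 2 := sq_nonneg _
      nlinarith [mul_le_mul_of_nonneg_right hkey hAnn']
  have hHsum : Summable (fun jk => (h2 jk + h1 jk) / (4 * Real.sqrt c)) :=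
    (h2sum.add h1sum).div_const _
  have hHtsum : ∑' jk, (h2 jk + h1 jk) / (4 * Real.sqrt c)
      = (2 * N + 1) / (4 * Real.sqrt c) := by
    rw [tsum_div_const, Summable.tsum_add h2sum h1sum, h2tsum, h1tsum]
    ring_nf
  refine ⟨hfsum, le_min ?_ ?_⟩
  · calc ∑' jk, f jk ≤ ∑' jk, h1 jk := Summable.tsum_le_tsum hb1 hfsum h1sum
    _ = N := h1tsum
  · calc ∑' jk, f jk ≤ ∑' jk, (h2 jk + h1 jk) / (4 * Real.sqrt c) :=
        Summable.tsum_le_tsum hb2 hfsum hHsum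
    _ = (2 * N + 1) / (4 * Real.sqrt c) := hHtsum
end

section
/- Let N_B > 0, η ∈ (0,1), δ > 0, β > 0, n > 0, m > 0 be real numbers. Set N_S = 4 δ √(η² N_B (1 + η² N_B)) / ((1-η²)² √n) and σ² = (1 + N_B) m / (2 β η² n). Then (m N_S) / (π (ln 2) σ²) ≥ (8 / (π ln 2)) · (N_B / (1 + N_B)) · β δ η⁴ √n. -/
open Real

/-- Key computation in the proof of the square-root law (Theorem 4): with the covert
photon number `N_S = 4δ√(η²N_B(1+η²N_B))/((1-η²)²√n)` and the induced AWGN noise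
variance `σ² = (1+N_B)m/(2βη²n)`, the random-coding exponent satisfies
`m N_S/(π (ln 2) σ²) ≥ (8/(π ln 2)) (N_B/(1+N_B)) β δ η⁴ √n`. -/
theorem srl_exponent (N_B η δ β n m N_S σ2 : ℝ)
    (hNB : 0 < N_B) (hη0 : 0 < η) (hη1 : η < 1) (hδ : 0 < δ) (hβ : 0 < β)
    (hn : 0 < n) (hm : 0 < m)
    (hNS : N_S = 4 * δ * Real.sqrt (η ^ 2 * N_B * (1 + η ^ 2 * N_B)) /
      ((1 - η ^ 2) ^ 2 * Real.sqrt n))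
    (hσ : σ2 = (1 + N_B) * m / (2 * β * η ^ 2 * n)) :
    (m * N_S) / (π * Real.log 2 * σ2) ≥
      (8 / (π * Real.log 2)) * (N_B / (1 + N_B)) * β * δ * η ^ 4 * Real.sqrt n := by
  have hπ : (0:ℝ) < π := Real.pi_pos
  have hl2 : (0:ℝ) < Real.log 2 := Real.log_pos (by norm_num)
  set q := Real.sqrt (η ^ 2 * N_B * (1 + η ^ 2 * N_B)) with hq
  set s := Real.sqrt n with hs
  have hs0 : 0 < s := Real.sqrt_pos.mpr hn
  have hs2 : s ^ 2 = n := Real.sq_sqrt hn.le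
  have hq0 : 0 ≤ q := Real.sqrt_nonneg _
  have hNB1 : 0 < 1 + N_B := by linarith
  have hηsq : (0:ℝ) < 1 - η ^ 2 := by nlinarith
  have hq2 : q ^ 2 = η ^ 2 * N_B * (1 + η ^ 2 * N_B) :=
    Real.sq_sqrt (by positivity)
  have hqge : η ^ 2 * N_B ≤ q := by
    rw [hq, show η ^ 2 * N_B * (1 + η ^ 2 * N_B)
        = (η ^ 2 * N_B) ^ 2 + η ^ 2 * N_B by ring]
    nlinarith [Real.sqrt_le_sqrt (show (η ^ 2 * N_B) ^ 2 ≤ (η ^ 2 * N_B) ^ 2 + η ^ 2 * N_B by nlinarith),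
      Real.sqrt_sq (show (0:ℝ) ≤ η ^ 2 * N_B by positivity)]
  subst hNS hσ
  rw [ge_iff_le]
  have h1 : (1 - η ^ 2) ^ 2 ≤ 1 := by nlinarith
  have key : η ^ 2 * N_B * (1 - η ^ 2) ^ 2 ≤ q := by nlinarith
  rw [show n = s ^ 2 from hs2.symm]
  field_simp
  nlinarith [mul_le_mul_of_nonneg_left key (by positivity :
      (0:ℝ) ≤ 8 * (δ * (β * (m * (η ^ 2 * (s ^ 2 * (π * (Real.log 2 * (1 + N_B)))))))))]
end
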